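/- Global invariance: if H is self-adjoint, U unitary with [U,H]=0, and the transpose (in a fixed basis) satisfies Hᵀ = H and Uᵀ = U, then for any positive semidefinite operators ρ_i, ρ_f on a finite-dimensional Hilbert space, Z̃(ρ_i)·Tr[ρ_f U G_H(ρ_i) U†] = Z̃(ρ_fᵀ)·Tr[ρ_iᵀ U G_H(ρ_fᵀ) U†], where G_H(ρ) = e^{-H/2k_BT}ρe^{-H/2k_BT}/Z̃(ρ) and Z̃(ρ) = Tr[e^{-H/k_BT}ρ]. -/

import Mathlib

open Matrix
open scoped ComplexOrder

/-- Z̃(ρ) = Tr[e^{-H/k_BT} ρ]. -/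
noncomputable def Ztilde {N : ℕ} (kT : ℝ) (H ρ : Matrix (Fin N) (Fin N) ℂ) : ℂ :=
  Matrix.trace (NormedSpace.exp (((-kT⁻¹ : ℝ) : ℂ) • H) * ρ)

/-- The Gibbs map G_H(ρ) = e^{-H/2k_BT} ρ e^{-H/2k_BT} / Z̃(ρ). -/
noncomputable def gibbsMap {N : ℕ} (kT : ℝ) (H ρ : Matrix (Fin N) (Fin N) ℂ) :
    Matrix (Fin N) (Fin N) ℂ :=
  (Ztilde kT H ρ)⁻¹ •
    (NormedSpace.exp (((-(2 * kT)⁻¹ : ℝ) : ℂ) • H) * ρ *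
      NormedSpace.exp (((-(2 * kT)⁻¹ : ℝ) : ℂ) • H))

/-!
Write `E = e^{-H/2k_BT}`. Multiplying by `Z̃` cancels the normalisation of the Gibbs map and
leaves `Tr[ρ_f U E ρ_i E U†]`. Since `E`, `U` and `U†` are symmetric, transposing this trace
and cycling it gives `Tr[ρ_iᵀ E U ρ_fᵀ U† E]`; as `U` commutes with `H`, and hence so do `U` and
`U† = U⁻¹` with `E`, this is `Tr[ρ_iᵀ U E ρ_fᵀ E U†]`.
-/

theorem Ztilde_smul_gibbsMap {N : ℕ} (kT : ℝ) (H ρ : Matrix (Fin N) (Fin N) ℂ)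
    (hZ : Ztilde kT H ρ ≠ 0) :
    Ztilde kT H ρ • gibbsMap kT H ρ =
      NormedSpace.exp (((-(2 * kT)⁻¹ : ℝ) : ℂ) • H) * ρ *
        NormedSpace.exp (((-(2 * kT)⁻¹ : ℝ) : ℂ) • H) := by
  rw [gibbsMap, smul_smul, mul_inv_cancel₀ hZ, one_smul]

theorem Matrix.trace_mul_sandwich_eq_transpose {n R : Type*} [Fintype n] [CommSemiring R]
    {A B E U V : Matrix n n R} (hE : Eᵀ = E) (hU : Uᵀ = U) (hV : Vᵀ = V)
    (hUE : Commute U E) (hVE : Commute V E) :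
    trace (A * U * (E * B * E) * V) = trace (Bᵀ * U * (E * Aᵀ * E) * V) := by
  calc trace (A * U * (E * B * E) * V)
      = trace (V * E * (Bᵀ * E * U * Aᵀ)) := by
        rw [← trace_transpose (A * U * _ * V)]
        simp only [transpose_mul, hE, hU, hV, mul_assoc]
    _ = trace (Bᵀ * (E * U) * Aᵀ * (V * E)) := by
        rw [trace_mul_comm]
        simp only [mul_assoc]
    _ = trace (Bᵀ * U * (E * Aᵀ * E) * V) := by
        rw [← hUE.eq, hVE.eq]
        simp only [mul_assoc]

theorem global_invariance_general {N : ℕ} (kT : ℝ)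
    (H U ρi ρf : Matrix (Fin N) (Fin N) ℂ)
    (hHT : H.transpose = H)
    (hU : U * Uᴴ = 1 ∧ Uᴴ * U = 1) (hUT : U.transpose = U)
    (hcomm : U * H = H * U)
    (hZi : Ztilde kT H ρi ≠ 0) (hZf : Ztilde kT H ρf.transpose ≠ 0) :
    Ztilde kT H ρi * Matrix.trace (ρf * U * gibbsMap kT H ρi * Uᴴ)
      = Ztilde kT H ρf.transpose *
          Matrix.trace (ρi.transpose * U * gibbsMap kT H ρf.transpose * Uᴴ) := by
  set E := NormedSpace.exp (((-(2 * kT)⁻¹ : ℝ) : ℂ) • H)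
  have hET : Eᵀ = E := by rw [← exp_transpose, transpose_smul, hHT]
  have hUE : Commute U E := (Commute.smul_right hcomm _).exp_right
  have hUHE : Commute Uᴴ E := Commute.units_inv_left (u := ⟨U, Uᴴ, hU.1, hU.2⟩) hUE
  have hUHT : Uᴴᵀ = Uᴴ := by
    rw [← conjTranspose_transpose_eq_transpose_conjTranspose, hUT]
  have hnormalise : ∀ ρ A, Ztilde kT H ρ ≠ 0 →
      Ztilde kT H ρ * trace (A * U * gibbsMap kT H ρ * Uᴴ) = trace (A * U * (E * ρ * E) * Uᴴ) := by
    intro ρ A hZ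
    rw [← Ztilde_smul_gibbsMap _ _ _ hZ, Matrix.mul_smul, Matrix.smul_mul, trace_smul,
      smul_eq_mul]
  rw [hnormalise _ _ hZi, hnormalise _ _ hZf]
  exact trace_mul_sandwich_eq_transpose hET hUT hUHT hUE hUHE

/-- Global invariance. If H is self-adjoint, U is unitary with [U,H] = 0,
and in a fixed basis Hᵀ = H and Uᵀ = U, then for positive semidefinite ρ_i, ρ_f,
Z̃(ρ_i)·Tr[ρ_f U G_H(ρ_i) U†] = Z̃(ρ_fᵀ)·Tr[ρ_iᵀ U G_H(ρ_fᵀ) U†]. -/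
theorem global_invariance {N : ℕ} (kT : ℝ) (hkT : 0 < kT)
    (H U ρi ρf : Matrix (Fin N) (Fin N) ℂ)
    (hH : H.IsHermitian) (hHT : H.transpose = H)
    (hU : U * Uᴴ = 1 ∧ Uᴴ * U = 1) (hUT : U.transpose = U)
    (hcomm : U * H = H * U)
    (hρi : ρi.PosSemidef) (hρf : ρf.PosSemidef)
    (hZi : Ztilde kT H ρi ≠ 0) (hZf : Ztilde kT H ρf.transpose ≠ 0) :
    Ztilde kT H ρi * Matrix.trace (ρf * U * gibbsMap kT H ρi * Uᴴ)
      = Ztilde kT H ρf.transpose *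
          Matrix.trace (ρi.transpose * U * gibbsMap kT H ρf.transpose * Uᴴ) :=
  global_invariance_general kT H U ρi ρf hHT hU hUT hcomm hZi hZf
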